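/- arXiv:1311.4216 — 2 statements merged into one kernel-verified Lean document; each statement's English description precedes it below -/
import Mathlib

section
/- Let χ be a Dirichlet character modulo k, let p₁ < ... < pₙ be the first n primes (n ≥ 1), and suppose the (n+1)-st prime pₙ₊₁ does not divide k. Then pₙ₊₁ = lim_{s→∞} |∑_{j=1}^{2pₙ−1} χ(j)/j^s − ∏_{k=1}^n (1 − χ(p_k)/p_k^s)^{−1}|^{−1/s}, where s ranges over real numbers tending to infinity. -/
/-!
Write `f_s(m) = χ(m) / m^s` and `q = pₙ₊₁`. Since `f_s` is completely multiplicative with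
`‖f_s(p)‖ < 1`, the Euler product `∏_{p < q} (1 - f_s(p))⁻¹` is the sum of `f_s` over the
`q`-smooth numbers. Every `m < q` is `q`-smooth, and Bertrand's postulate gives `q ≤ 2pₙ - 1`, so
the partial sum minus the product is `f_s(q)` plus terms `± f_s(m)` with `m > q`. After
multiplying by `q^s` these terms are `± χ(m) (q/m)^s`, which tend to `0` under the summable bound
`(q/m)^2`; hence `q^s · (difference) → χ(q) ≠ 0` (as `q ∤ k`), and the `(-1/s)`-th power of the
difference tends to `q`.
-/

open Filter Topology Finset

namespace Nat

lemma nth_prime_succ_le_two_mul_sub_one (n : ℕ) :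
    nth Prime (n + 1) ≤ 2 * nth Prime n - 1 := by
  set p := nth Prime n
  have hp := prime_nth_prime n
  obtain ⟨r, hr, hpr, hr2p⟩ := exists_prime_lt_and_le_two_mul p hp.ne_zero
  have hr_ne : r ≠ 2 * p := by
    rintro rfl
    have := (hr.eq_one_or_self_of_dvd 2 (dvd_mul_right 2 p)).resolve_left (by omega)
    have := hp.two_le
    omega
  have hnext : nth Prime (n + 1) ≤ r := by
    by_contra! h
    exact (le_nth_of_lt_nth_succ h hr).not_gt hpr
  omega

lemma prod_range_nth_prime {M : Type*} [CommMonoid M] (g : ℕ → M) (n : ℕ) :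
    ∏ i ∈ range n, g (nth Prime i) = ∏ p ∈ primesBelow (nth Prime n), g p := by
  induction n with
  | zero => simp [nth_prime_zero_eq_two]
  | succ n ih =>
    rw [prod_range_succ, ih, primesBelow, primesBelow,
      filter_range_nth_eq_insert_of_infinite (p := Prime) infinite_setOfPred_prime,
      prod_insert (by simp), mul_comm]

section IndicatorSmoothNumbers

variable {E : Type*} [AddGroup E] (f : ℕ → E) {q N : ℕ}

lemma indicator_Icc_sub_indicator_smoothNumbers_of_lt (hqN : q ≤ N) {m : ℕ} (hm : m < q) :
    (↑(Icc 1 N) : Set ℕ).indicator f m - q.smoothNumbers.indicator f m = 0 := by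
  rcases m.eq_zero_or_pos with rfl | hm0
  · simp [mem_smoothNumbers]
  · have hmN : m ∈ (↑(Icc 1 N) : Set ℕ) := by simp only [coe_Icc, Set.mem_Icc]; omega
    rw [Set.indicator_of_mem hmN, Set.indicator_of_mem (mem_smoothNumbers_of_lt hm0 hm), sub_self]

lemma indicator_Icc_sub_indicator_smoothNumbers_prime (hq : q.Prime) (hqN : q ≤ N) :
    (↑(Icc 1 N) : Set ℕ).indicator f q - q.smoothNumbers.indicator f q = f q := by
  have hq_mem : q ∈ (↑(Icc 1 N) : Set ℕ) := by
    simp only [coe_Icc, Set.mem_Icc]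
    exact ⟨hq.one_le, hqN⟩
  have hq_smooth : q ∉ q.smoothNumbers := fun h =>
    lt_irrefl q (mem_smoothNumbers'.mp h q hq dvd_rfl)
  rw [Set.indicator_of_mem hq_mem, Set.indicator_of_notMem hq_smooth, sub_zero]

end IndicatorSmoothNumbers

end Nat

lemma tendsto_rpow_neg_one_div_of_tendsto_rpow_mul {a c : ℝ} (ha : 0 < a) (hc : c ≠ 0)
    {u : ℝ → ℝ} (hu : ∀ s, 0 ≤ u s) (h : Tendsto (fun s => a ^ s * u s) atTop (𝓝 c)) :
    Tendsto (fun s => u s ^ (-1 / s)) atTop (𝓝 a) := by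
  have hexp : Tendsto (fun s : ℝ => -1 / s) atTop (𝓝 0) :=
    tendsto_const_nhds.div_atTop tendsto_id
  have hroot : Tendsto (fun s => (a ^ s * u s) ^ (-1 / s)) atTop (𝓝 1) := by
    simpa using h.rpow hexp (Or.inl hc)
  refine (by simpa using hroot.const_mul a : Tendsto _ _ (𝓝 a)).congr' ?_
  filter_upwards [eventually_gt_atTop 0] with s hs
  rw [Real.mul_rpow (by positivity) (hu s), ← Real.rpow_mul ha.le, mul_div_cancel₀ _ hs.ne',
    Real.rpow_neg_one, ← mul_assoc, mul_inv_cancel₀ ha.ne', one_mul]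

lemma tendsto_tsum_div_rpow_smul {E : Type*} [NormedAddCommGroup E] [NormedSpace ℝ E]
    [CompleteSpace E] {q : ℕ} (hq : 0 < q) {g : ℕ → E} {C : ℝ} (hg : ∀ m, ‖g m‖ ≤ C)
    (hg_lt : ∀ m < q, g m = 0) :
    Tendsto (fun s : ℝ => ∑' m : ℕ, ((q : ℝ) / m) ^ s • g m) atTop (𝓝 (g q)) := by
  rw [← tsum_ite_eq q g]
  refine tendsto_tsum_of_dominated_convergence (bound := fun m => C * (q : ℝ) ^ 2 * (1 / m ^ 2))
    ((Real.summable_one_div_nat_pow.mpr one_lt_two).mul_left _) (fun m => ?_) ?_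
  · rcases lt_trichotomy m q with hmq | rfl | hqm
    · simp [hg_lt m hmq, hmq.ne]
    · simp [div_self (show (m : ℝ) ≠ 0 by exact_mod_cast hq.ne')]
    · have hlt : (q : ℝ) / m < 1 := (div_lt_one (by exact_mod_cast hq.trans hqm)).mpr
        (by exact_mod_cast hqm)
      have hnonneg : (0 : ℝ) ≤ q / m := by positivity
      simpa [hqm.ne'] using
        (tendsto_rpow_atTop_of_base_lt_one _ (by linarith) hlt).smul_const (g m)
  · filter_upwards [eventually_ge_atTop 2] with s hs m
    rcases lt_or_ge m q with hmq | hqm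
    · rw [hg_lt m hmq, smul_zero, norm_zero]
      have hC : 0 ≤ C := (norm_nonneg _).trans (hg 0)
      positivity
    · have hm : (0 : ℝ) < m := by exact_mod_cast hq.trans_le hqm
      have hbase : (q : ℝ) / m ≤ 1 := (div_le_one hm).mpr (by exact_mod_cast hqm)
      calc ‖((q : ℝ) / m) ^ s • g m‖ = ((q : ℝ) / m) ^ s * ‖g m‖ := by
            rw [norm_smul, Real.norm_of_nonneg (by positivity)]
        _ ≤ ((q : ℝ) / m) ^ (2 : ℝ) * C :=
            mul_le_mul (Real.rpow_le_rpow_of_exponent_ge (by positivity) hbase hs) (hg m)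
              (norm_nonneg _) (by positivity)
        _ = C * q ^ 2 * (1 / m ^ 2) := by rw [Real.rpow_two]; ring

namespace DirichletCharacter

variable {k : ℕ} (χ : DirichletCharacter ℂ k)

noncomputable def termHom (s : ℝ) : ℕ →* ℂ where
  toFun m := χ m / (m : ℂ) ^ (s : ℂ)
  map_one' := by simp
  map_mul' a b := by
    rw [Nat.cast_mul, map_mul, Nat.cast_mul, ← Complex.ofReal_natCast a,
      ← Complex.ofReal_natCast b, Complex.mul_cpow_ofReal_nonneg (by positivity) (by positivity),
      mul_div_mul_comm]

lemma termHom_apply (s : ℝ) (m : ℕ) : χ.termHom s m = χ m / (m : ℂ) ^ (s : ℂ) := rfl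

lemma norm_termHom_lt_one {s : ℝ} (hs : 0 < s) {p : ℕ} (hp : p.Prime) :
    ‖χ.termHom s p‖ < 1 := by
  rw [termHom_apply, norm_div, Complex.norm_cpow_real, Complex.norm_natCast]
  exact (div_le_div_of_nonneg_right (χ.norm_le_one _) (by positivity)).trans_lt
    ((div_lt_one (Real.rpow_pos_of_pos (by exact_mod_cast hp.pos) s)).mpr
      (Real.one_lt_rpow (by exact_mod_cast hp.one_lt) hs))

lemma cpow_mul_termHom {a : ℝ} (ha : 0 ≤ a) (s : ℝ) (m : ℕ) :
    (a : ℂ) ^ (s : ℂ) * χ.termHom s m = (a / m) ^ s • χ m := by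
  rw [termHom_apply, Complex.real_smul, Real.div_rpow ha m.cast_nonneg, Complex.ofReal_div,
    Complex.ofReal_cpow ha, Complex.ofReal_cpow m.cast_nonneg, Complex.ofReal_natCast]
  ring

lemma cpow_mul_sum_sub_prod_eq_tsum {s : ℝ} (hs : 0 < s) {a : ℝ} (ha : 0 ≤ a) (N P : ℕ) :
    (a : ℂ) ^ (s : ℂ) *
        (∑ j ∈ Icc 1 N, χ.termHom s j - ∏ p ∈ P.primesBelow, (1 - χ.termHom s p)⁻¹) =
      ∑' m : ℕ, (a / m) ^ s • ((↑(Icc 1 N) : Set ℕ).indicator (fun m : ℕ => χ m) m -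
        P.smoothNumbers.indicator (fun m : ℕ => χ m) m) := by
  have hfin := hasSum_subtype_iff_indicator.mp (Finset.hasSum (Icc 1 N) (χ.termHom s))
  have heuler := hasSum_subtype_iff_indicator.mp
    (EulerProduct.summable_and_hasSum_smoothNumbers_prod_primesBelow_geometric
      (χ.norm_termHom_lt_one hs) P).2
  rw [← ((hfin.sub heuler).mul_left _).tsum_eq]
  congr 1 with m
  simp only [Set.indicator_apply]
  split_ifs <;> simp [cpow_mul_termHom χ ha]

end DirichletCharacter

/-- pₙ₊₁ = lim_{s→∞} |∑_{j=1}^{2pₙ−1} χ(j)/j^s − ∏_{k=1}^n (1 − χ(p_k)/p_k^s)⁻¹|^{-1/s},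
for n ≥ 1, provided pₙ₊₁ does not divide the modulus k. -/
theorem stmt_4 (k : ℕ) (χ : DirichletCharacter ℂ k) (n : ℕ) (hn : 1 ≤ n)
    (hdvd : ¬ Nat.nth Nat.Prime n ∣ k) :
    Tendsto (fun s : ℝ =>
      ‖((∑ j ∈ Finset.Icc 1 (2 * Nat.nth Nat.Prime (n - 1) - 1),
          χ (j : ZMod k) / (j : ℂ) ^ (s : ℂ)) -
        ∏ i ∈ Finset.range n,
          (1 - χ ((Nat.nth Nat.Prime i : ℕ) : ZMod k) /
            (Nat.nth Nat.Prime i : ℂ) ^ (s : ℂ))⁻¹)‖ ^ (-1 / s))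
      atTop (nhds (Nat.nth Nat.Prime n : ℝ)) := by
  obtain ⟨n, rfl⟩ : ∃ m, n = m + 1 := ⟨n - 1, by omega⟩
  simp only [Nat.add_sub_cancel, ← χ.termHom_apply] at hdvd ⊢
  set q := Nat.nth Nat.Prime (n + 1)
  set N := 2 * Nat.nth Nat.Prime n - 1
  have hq : q.Prime := Nat.prime_nth_prime (n + 1)
  have hqN : q ≤ N := Nat.nth_prime_succ_le_two_mul_sub_one n
  have hχq : χ q ≠ 0 :=
    (((ZMod.isUnit_iff_coprime q k).mpr (hq.coprime_iff_not_dvd.mpr hdvd)).map χ).ne_zero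
  set g : ℕ → ℂ := fun m => (↑(Icc 1 N) : Set ℕ).indicator (fun m : ℕ => χ m) m -
    q.smoothNumbers.indicator (fun m : ℕ => χ m) m
  have hg_le (m : ℕ) : ‖g m‖ ≤ 2 := by
    have h (S : Set ℕ) : ‖S.indicator (fun m : ℕ => χ m) m‖ ≤ 1 :=
      (norm_indicator_le_norm_self _ m).trans (χ.norm_le_one m)
    linarith [norm_sub_le ((↑(Icc 1 N) : Set ℕ).indicator (fun m : ℕ => χ m) m)
      (q.smoothNumbers.indicator (fun m : ℕ => χ m) m), h ↑(Icc 1 N), h q.smoothNumbers]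
  have hlim := tendsto_tsum_div_rpow_smul hq.pos hg_le
    fun m hm => Nat.indicator_Icc_sub_indicator_smoothNumbers_of_lt _ hqN hm
  rw [show g q = χ q from Nat.indicator_Icc_sub_indicator_smoothNumbers_prime _ hq hqN] at hlim
  refine tendsto_rpow_neg_one_div_of_tendsto_rpow_mul (Nat.cast_pos.mpr hq.pos)
    (norm_ne_zero_iff.mpr hχq) (fun _ => norm_nonneg _) (hlim.norm.congr' ?_)
  filter_upwards [eventually_gt_atTop 0] with s hs
  rw [Nat.prod_range_nth_prime (fun p => (1 - χ.termHom s p)⁻¹),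
    ← χ.cpow_mul_sum_sub_prod_eq_tsum hs q.cast_nonneg, norm_mul, Complex.norm_cpow_real,
    Complex.norm_real, Real.norm_natCast]
end

section
/- Let χ be a Dirichlet character modulo k and n ≥ 1. Suppose pₙ₊₁ ∤ k, where pₙ₊₁ is the (n+1)-st prime. Then for the function f(s) = ∑_{j=1}^{2pₙ−1} χ(j)/j^s − ∏_{k=1}^n (1 − χ(p_k)/p_k^s)^{−1} (real s), one has lim_{s→∞} pₙ₊₁^s · f(s) = χ(pₙ₊₁); in particular f(s) ≠ 0 for all sufficiently large s. -/
/-!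
Let `p = pₙ₊₁` and `M = 2pₙ - 1`. For `Re s > 1` the finite Euler product over the primes
below `p` is the sum of `χ(m)/m^s` over the `p`-smooth `m`, so `f(s) = ∑ c(m)/m^s` with
`c = χ·1_{[1, M]} - χ·1_{p-smooth}`. Every `m < p` is `p`-smooth and at most `M` (Bertrand), so
`c` vanishes below `p`, while `c(p) = χ(p)`. After multiplying by `p^s` each term with `m > p`
decays like `(p/m)^s`, and dominated convergence gives the limit `χ(p)`, which is nonzero
because `p ∤ k`.
-/

open Filter Topology

namespace Nat

lemma nth_prime_succ_lt_two_mul (n : ℕ) : nth Prime (n + 1) < 2 * nth Prime n := by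
  have hq := prime_nth_prime n
  obtain ⟨r, hr, hqr, hr2⟩ := exists_prime_lt_and_le_two_mul (nth Prime n) hq.ne_zero
  have hpr : nth Prime (n + 1) ≤ r := by
    by_contra! h
    exact (le_nth_of_lt_nth_succ h hr).not_gt hqr
  have hr2' : r ≠ 2 * nth Prime n := by
    rintro rfl
    exact not_prime_mul (by norm_num) hq.ne_one hr
  omega

lemma primesBelow_nth_prime (n : ℕ) :
    (nth Prime n).primesBelow = (Finset.range n).image (nth Prime) := by
  ext r
  simp only [mem_primesBelow, Finset.mem_image, Finset.mem_range]
  constructor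
  · rintro ⟨hlt, hr⟩
    refine ⟨count Prime r, ?_, nth_count hr⟩
    rwa [← nth_count hr, nth_lt_nth infinite_setOfPred_prime] at hlt
  · rintro ⟨i, hi, rfl⟩
    exact ⟨(nth_lt_nth infinite_setOfPred_prime).mpr hi, prime_nth_prime i⟩

end Nat

lemma norm_natCast_cpow_mul_div_natCast_cpow {p m : ℕ} (hp : 0 < p) (hm : 0 < m) (c : ℂ)
    (s : ℝ) :
    ‖(p : ℂ) ^ (s : ℂ) * (c / (m : ℂ) ^ (s : ℂ))‖ = ‖c‖ * ((p : ℝ) / m) ^ s := by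
  rw [norm_mul, norm_div, Complex.norm_natCast_cpow_of_pos hp,
    Complex.norm_natCast_cpow_of_pos hm, Complex.ofReal_re,
    Real.div_rpow p.cast_nonneg m.cast_nonneg]
  ring

lemma tendsto_natCast_cpow_mul_tsum_div_cpow {c : ℕ → ℂ} {p : ℕ} {C : ℝ} (hp : 0 < p)
    (hc : ∀ m < p, c m = 0) (hC : ∀ m, ‖c m‖ ≤ C) :
    Tendsto (fun s : ℝ ↦ (p : ℂ) ^ (s : ℂ) * ∑' m : ℕ, c m / (m : ℂ) ^ (s : ℂ)) atTop
      (𝓝 (c p)) := by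
  have hterm : ∀ m, Tendsto (fun s : ℝ ↦ (p : ℂ) ^ (s : ℂ) * (c m / (m : ℂ) ^ (s : ℂ)))
      atTop (𝓝 (if m = p then c p else 0)) := by
    intro m
    rcases lt_trichotomy m p with hmp | rfl | hmp
    · simp [hc m hmp, hmp.ne]
    · refine tendsto_const_nhds.congr fun s ↦ ?_
      rw [if_pos rfl, mul_div_cancel₀ _ (by simp [hp.ne'])]
    · rw [if_neg hmp.ne']
      have hm : (0 : ℝ) < m := by exact_mod_cast hp.trans hmp
      refine squeeze_zero_norm
        (fun s ↦ (norm_natCast_cpow_mul_div_natCast_cpow hp (hp.trans hmp) _ _).le) ?_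
      have hpm : (p : ℝ) / m < 1 := (div_lt_one hm).mpr (by exact_mod_cast hmp)
      simpa using (tendsto_rpow_atTop_of_base_lt_one _
        (by linarith [div_nonneg p.cast_nonneg hm.le]) hpm).const_mul ‖c m‖
  have hbound : ∀ᶠ s : ℝ in atTop, ∀ m,
      ‖(p : ℂ) ^ (s : ℂ) * (c m / (m : ℂ) ^ (s : ℂ))‖ ≤ C * ((p : ℝ) / m) ^ 2 := by
    filter_upwards [eventually_ge_atTop 2] with s hs m
    rcases lt_or_ge m p with hmp | hpm
    · simp only [hc m hmp, zero_div, mul_zero, norm_zero]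
      exact mul_nonneg ((norm_nonneg _).trans (hC m)) (by positivity)
    rw [norm_natCast_cpow_mul_div_natCast_cpow hp (hp.trans_le hpm)]
    have hpow : ((p : ℝ) / m) ^ s ≤ ((p : ℝ) / m) ^ 2 := by
      rw [← Real.rpow_two]
      exact Real.rpow_le_rpow_of_exponent_ge (by have : 0 < m := hp.trans_le hpm; positivity)
        (div_le_one_of_le₀ (by exact_mod_cast hpm) (by positivity)) hs
    exact mul_le_mul (hC m) hpow (by positivity) ((norm_nonneg _).trans (hC m))
  have hsum : Summable fun m : ℕ ↦ C * ((p : ℝ) / m) ^ 2 :=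
    ((Real.summable_nat_pow_inv.mpr one_lt_two).mul_left (C * p ^ 2)).congr fun m ↦ by ring
  simpa only [tsum_mul_left, tsum_ite_eq] using
    tendsto_tsum_of_dominated_convergence hsum hterm hbound

namespace DirichletCharacter

variable {k : ℕ} (χ : DirichletCharacter ℂ k) {s : ℂ}

lemma prod_primesBelow_eq_tsum_smoothNumbers (hs : 1 < s.re) (N : ℕ) :
    ∏ p ∈ N.primesBelow, (1 - χ p / (p : ℂ) ^ s)⁻¹ =
      ∑' m : N.smoothNumbers, χ m / (m : ℂ) ^ s := by
  have := EulerProduct.prod_primesBelow_geometric_eq_tsum_smoothNumbers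
    (f := (dirichletSummandHom χ (Complex.ne_zero_of_one_lt_re hs) : ℕ →* ℂ))
    (summable_dirichletSummand χ hs).of_norm N
  simpa [dirichletSummandHom, Complex.cpow_neg, div_eq_mul_inv] using this

lemma sum_Icc_sub_prod_primesBelow_eq_tsum (hs : 1 < s.re) (M N : ℕ) :
    ∑ j ∈ Finset.Icc 1 M, χ j / (j : ℂ) ^ s -
        ∏ p ∈ N.primesBelow, (1 - χ p / (p : ℂ) ^ s)⁻¹ =
      ∑' m : ℕ, (Set.indicator (Finset.Icc 1 M) (fun j : ℕ ↦ χ j) m -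
        N.smoothNumbers.indicator (fun j : ℕ ↦ χ j) m) / (m : ℂ) ^ s := by
  have hsum : Summable fun m : ℕ ↦ χ m / (m : ℂ) ^ s := by
    simpa [dirichletSummandHom, Complex.cpow_neg, div_eq_mul_inv] using
      (summable_dirichletSummand χ hs).of_norm
  rw [prod_primesBelow_eq_tsum_smoothNumbers χ hs, sum_eq_tsum_indicator,
    tsum_subtype N.smoothNumbers (fun m : ℕ ↦ χ m / (m : ℂ) ^ s),
    ← (hsum.indicator _).tsum_sub (hsum.indicator _)]
  congr 1 with m
  simp only [Set.indicator_apply]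
  split_ifs <;> ring

lemma tendsto_cpow_mul_sum_Icc_sub_prod_primesBelow {p M : ℕ} (hp : p.Prime) (hpM : p ≤ M) :
    Tendsto (fun s : ℝ ↦ (p : ℂ) ^ (s : ℂ) *
      (∑ j ∈ Finset.Icc 1 M, χ j / (j : ℂ) ^ (s : ℂ) -
        ∏ q ∈ p.primesBelow, (1 - χ q / (q : ℂ) ^ (s : ℂ))⁻¹)) atTop (𝓝 (χ p)) := by
  set c : ℕ → ℂ := fun m ↦ Set.indicator (Finset.Icc 1 M) (fun j : ℕ ↦ χ j) m -
    p.smoothNumbers.indicator (fun j : ℕ ↦ χ j) m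
  have hcp : c p = χ p := by
    have hpS : p ∉ p.smoothNumbers := fun h ↦
      (Nat.mem_smoothNumbers'.mp h p hp dvd_rfl).false
    simp [c, hp.one_le, hpM, hpS]
  have hc : ∀ m < p, c m = 0 := fun m hm ↦ by
    rcases m.eq_zero_or_pos with rfl | hm0
    · simp [c, Nat.mem_smoothNumbers]
    · have hmI : m ∈ Set.Icc 1 M := ⟨hm0, hm.le.trans hpM⟩
      simp [c, Nat.mem_smoothNumbers_of_lt hm0 hm, hmI]
  have hχ : ∀ (S : Set ℕ) m, ‖S.indicator (fun j : ℕ ↦ χ j) m‖ ≤ 1 := fun _ _ ↦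
    (norm_indicator_le_norm_self _ _).trans (χ.norm_le_one _)
  have hC : ∀ m, ‖c m‖ ≤ 2 := fun m ↦
    (norm_sub_le _ _).trans <| (add_le_add (hχ _ m) (hχ _ m)).trans_eq one_add_one_eq_two
  rw [← hcp]
  refine (tendsto_natCast_cpow_mul_tsum_div_cpow hp.pos hc hC).congr' ?_
  filter_upwards [eventually_gt_atTop 1] with s hs
  rw [χ.sum_Icc_sub_prod_primesBelow_eq_tsum (by simpa using hs)]

end DirichletCharacter

/-- With f(s) = ∑_{j=1}^{2pₙ−1} χ(j)/j^s − ∏_{k=1}^n (1 − χ(p_k)/p_k^s)⁻¹ and pₙ₊₁ ∤ k: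
lim_{s→∞} pₙ₊₁^s · f(s) = χ(pₙ₊₁), and f(s) ≠ 0 for all sufficiently large s. -/
theorem stmt_10 (k : ℕ) (χ : DirichletCharacter ℂ k) (n : ℕ) (hn : 1 ≤ n)
    (hdvd : ¬ Nat.nth Nat.Prime n ∣ k)
    (f : ℝ → ℂ)
    (hf : ∀ s : ℝ, f s =
      (∑ j ∈ Finset.Icc 1 (2 * Nat.nth Nat.Prime (n - 1) - 1),
          χ (j : ZMod k) / (j : ℂ) ^ (s : ℂ)) -
        ∏ i ∈ Finset.range n,
          (1 - χ ((Nat.nth Nat.Prime i : ℕ) : ZMod k) /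
            (Nat.nth Nat.Prime i : ℂ) ^ (s : ℂ))⁻¹) :
    Tendsto (fun s : ℝ => ((Nat.nth Nat.Prime n : ℕ) : ℂ) ^ (s : ℂ) * f s)
        atTop (nhds (χ ((Nat.nth Nat.Prime n : ℕ) : ZMod k))) ∧
      ∀ᶠ s : ℝ in atTop, f s ≠ 0 := by
  obtain ⟨n, rfl⟩ : ∃ m, n = m + 1 := ⟨n - 1, by omega⟩
  have hp := Nat.prime_nth_prime (n + 1)
  have hpM : Nat.nth Nat.Prime (n + 1) ≤ 2 * Nat.nth Nat.Prime n - 1 := by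
    have := Nat.nth_prime_succ_lt_two_mul n
    omega
  have hlim : Tendsto (fun s : ℝ ↦ (Nat.nth Nat.Prime (n + 1) : ℂ) ^ (s : ℂ) * f s) atTop
      (𝓝 (χ (Nat.nth Nat.Prime (n + 1)))) := by
    simpa only [hf, Nat.add_sub_cancel, Nat.primesBelow_nth_prime,
      Finset.prod_image fun i _ j _ h ↦ Nat.nth_injective Nat.infinite_setOfPred_prime h]
      using χ.tendsto_cpow_mul_sum_Icc_sub_prod_primesBelow hp hpM
  have hχp : χ (Nat.nth Nat.Prime (n + 1)) ≠ 0 :=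
    (((ZMod.isUnit_prime_iff_not_dvd hp).mpr hdvd).map χ).ne_zero
  exact ⟨hlim, (hlim.eventually_ne hχp).mono fun _ hs ↦ right_ne_zero_of_mul hs⟩
end
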